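/- arXiv:1811.01119 — 3 statements merged into one kernel-verified Lean document; each statement's English description precedes it below -/
import Mathlib

section
/- Let P be a poset, Σ ⊆ P a finite chain (string). Let Pair(P) be the poset of pairs (S, S') with S, S' chains in P and S' ⊆ S, ordered by (S,S') ≤ (T,T') iff T ⊆ S and S' ⊆ T'. Let Pair_Σ(P) ⊆ Pair(P) be the full subposet of pairs (S, S') with S' ⊆ Σ, and Pair(Σ) ⊆ Pair_Σ(P) the subposet of pairs with S ⊆ Σ. Then the inclusion Pair(Σ) ⊆ Pair_Σ(P) admits a left adjoint given by (S, S') ↦ (S ∩ Σ, S'). -/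
/-- For a finite chain `Σ ⊆ P`, the assignment `(S, S') ↦ (S ∩ Σ, S')` is a
left adjoint to the inclusion `Pair(Σ) ⊆ Pair_Σ(P)`: `S ∩ Σ` is again a nonempty chain
containing `S'`, contained in `Σ`, and for every `(T, T') ∈ Pair(Σ)` we have
`(S ∩ Σ, S') ≤ (T, T') ↔ (S, S') ≤ (T, T')` in the order
`(A, A') ≤ (B, B') ↔ B ⊆ A ∧ A' ⊆ B'`. -/
theorem stmt_4 {P : Type} [PartialOrder P] [DecidableEq P] (Sig : Finset P)
    (hSig : Sig.Nonempty ∧ IsChain (· ≤ ·) (↑Sig : Set P))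
    (S S' : Finset P)
    (hS : S.Nonempty ∧ IsChain (· ≤ ·) (↑S : Set P))
    (hS' : S'.Nonempty ∧ IsChain (· ≤ ·) (↑S' : Set P))
    (hsub : S' ⊆ S) (hSSig : S' ⊆ Sig) :
    ((S ∩ Sig).Nonempty ∧ IsChain (· ≤ ·) (↑(S ∩ Sig) : Set P) ∧
      S' ⊆ S ∩ Sig ∧ S ∩ Sig ⊆ Sig) ∧
    (∀ T T' : Finset P, T'.Nonempty → IsChain (· ≤ ·) (↑T : Set P) →
      IsChain (· ≤ ·) (↑T' : Set P) → T' ⊆ T → T ⊆ Sig →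
      ((T ⊆ S ∩ Sig ∧ S' ⊆ T') ↔ (T ⊆ S ∧ S' ⊆ T'))) := by
  have hss : S' ⊆ S ∩ Sig := Finset.subset_inter hsub hSSig
  refine ⟨⟨hS'.1.mono hss, hS.2.mono (Finset.coe_subset.2 Finset.inter_subset_left),
    hss, Finset.inter_subset_right⟩, ?_⟩
  intro T T' _ _ _ _ hTSig
  constructor
  · rintro ⟨h1, h2⟩; exact ⟨h1.trans Finset.inter_subset_left, h2⟩
  · rintro ⟨h1, h2⟩; exact ⟨Finset.subset_inter h1 hTSig, h2⟩
end

section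
/- Let E_{x,y} be the space of continuous paths γ : [0,1] → |Δⁿ| with γ(0) = x, γ(1) = y, and for all t > 0, γ(t) lies in the stratum {s ∈ |Δⁿ| : max{i : sᵢ ≠ 0} = j}, where x lies in stratum i, y lies in stratum j, and i ≤ j. Then the formula h(γ, s)(t) = (1−s)γ(t) + s(1−t)x + s t y defines a contracting homotopy on E_{x,y}; in particular E_{x,y} is contractible. -/
/-!
The stratum `{v ∈ |Δⁿ| | v j ≠ 0, v k = 0 for k > j}` is convex, and so are `{x}` and `{y}`.
Hence `E_{x,y}`, viewed inside `C(I, ℝⁿ⁺¹)`, is cut out by pointwise convex constraints, so it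
is a convex set; it contains the segment `t ↦ (1 - t) x + t y`, which lies in stratum `j` for
`t > 0` because `x` lies in the closure of that stratum. The formula `h` is the straight-line
homotopy from `γ` to this segment, and a nonempty convex set is contractible.
-/

open unitInterval Topology

section Stratum

variable {ι : Type*} [Fintype ι] [LinearOrder ι]

def simplexStratum (j : ι) : Set (ι → ℝ) :=
  {v ∈ stdSimplex ℝ ι | v j ≠ 0 ∧ ∀ k, j < k → v k = 0}

lemma simplexStratum_subset (j : ι) : simplexStratum j ⊆ stdSimplex ℝ ι := fun _ hv => hv.1

lemma pos_of_mem_simplexStratum {j : ι} {v : ι → ℝ} (hv : v ∈ simplexStratum j) : 0 < v j :=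
  (hv.1.1 j).lt_of_ne' hv.2.1

lemma convex_simplexStratum (j : ι) : Convex ℝ (simplexStratum j) := by
  intro v hv w hw a b ha hb hab
  refine ⟨convex_stdSimplex ℝ ι hv.1 hw.1 ha hb hab, ?_, fun k hk => ?_⟩
  · have hvj := pos_of_mem_simplexStratum hv
    have hwj := pos_of_mem_simplexStratum hw
    simp only [Pi.add_apply, Pi.smul_apply, smul_eq_mul]
    rcases ha.lt_or_eq with ha | rfl
    · nlinarith [mul_pos ha hvj, mul_nonneg hb hwj.le]
    · simp only [zero_add] at hab
      simp [hab, hwj.ne']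
  · simp [hv.2.2 k hk, hw.2.2 k hk]

lemma lineMap_mem_simplexStratum {j : ι} {x y : ι → ℝ} (hx : x ∈ stdSimplex ℝ ι)
    (hxj : ∀ k, j < k → x k = 0) (hy : y ∈ simplexStratum j) {t : ℝ} (ht₀ : 0 < t)
    (ht₁ : t ≤ 1) : AffineMap.lineMap x y t ∈ simplexStratum j := by
  rw [AffineMap.lineMap_apply_module]
  refine ⟨convex_stdSimplex ℝ ι hx hy.1 (sub_nonneg.2 ht₁) ht₀.le (sub_add_cancel 1 t), ?_,
    fun k hk => ?_⟩
  · simp only [Pi.add_apply, Pi.smul_apply, smul_eq_mul]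
    nlinarith [mul_nonneg (sub_nonneg.2 ht₁) (hx.1 j), mul_pos ht₀ (pos_of_mem_simplexStratum hy)]
  · simp [hxj k hk, hy.2.2 k hk]

end Stratum

section PathSpace

variable {X E : Type*} [TopologicalSpace X] [AddCommGroup E] [Module ℝ E] [TopologicalSpace E]

lemma ContinuousMap.convex_setOf_forall_mem [IsTopologicalAddGroup E] [ContinuousConstSMul ℝ E]
    {A : X → Set E} (hA : ∀ t, Convex ℝ (A t)) :
    Convex ℝ {f : C(X, E) | ∀ t, f t ∈ A t} :=
  fun _ hf _ hg _ _ ha hb hab t => hA t (hf t) (hg t) ha hb hab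

lemma ContinuousMap.contractibleSpace_of_forall_mem_convex [IsTopologicalAddGroup E]
    [ContinuousSMul ℝ E]
    {K : Set E} {A : X → Set E} (hA : ∀ t, Convex ℝ (A t)) (hAK : ∀ t, A t ⊆ K)
    (ℓ : C(X, E)) (hℓ : ∀ t, ℓ t ∈ A t) :
    ContractibleSpace {γ : C(X, K) // ∀ t, (γ t : E) ∈ A t} := by
  let e : {γ : C(X, K) // ∀ t, (γ t : E) ∈ A t} → C(X, E) :=
    fun γ => .comp ⟨(↑), continuous_subtype_val⟩ γ.1
  have he : IsEmbedding e :=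
    (isEmbedding_postcomp _ IsEmbedding.subtypeVal).comp IsEmbedding.subtypeVal
  have hrange : Set.range e = {f : C(X, E) | ∀ t, f t ∈ A t} := by
    refine Set.Subset.antisymm (Set.range_subset_iff.2 fun γ => γ.2) fun f hf => ?_
    exact ⟨⟨⟨fun t => ⟨f t, hAK t (hf t)⟩, by fun_prop⟩, hf⟩, rfl⟩
  have := (ContinuousMap.convex_setOf_forall_mem hA).contractibleSpace ⟨ℓ, hℓ⟩
  exact (he.toHomeomorph.trans (Homeomorph.setCongr hrange)).contractibleSpace

end PathSpace

section ExitPaths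

variable {ι : Type*} [Fintype ι] [LinearOrder ι]

lemma convexCombination_mem_simplexStratum {j : ι} {g x y : ι → ℝ} (hg : g ∈ simplexStratum j)
    (hx : x ∈ stdSimplex ℝ ι) (hxj : ∀ k, j < k → x k = 0) (hy : y ∈ simplexStratum j)
    {s t : ℝ} (hs₀ : 0 ≤ s) (hs₁ : s ≤ 1) (ht₀ : 0 < t) (ht₁ : t ≤ 1) :
    (fun k => (1 - s) * g k + s * (1 - t) * x k + s * t * y k) ∈ simplexStratum j := by
  convert convex_simplexStratum j hg (lineMap_mem_simplexStratum hx hxj hy ht₀ ht₁)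
    (sub_nonneg.2 hs₁) hs₀ (sub_add_cancel 1 s) using 1
  funext k
  simp only [AffineMap.lineMap_apply_module, Pi.add_apply, Pi.smul_apply, smul_eq_mul]
  ring

noncomputable def exitPathConstraint (x y : ι → ℝ) (j : ι) (t : I) : Set (ι → ℝ) :=
  if t = 0 then {x} else if t = 1 then {y} else simplexStratum j

variable {x y : ι → ℝ} {j : ι}

lemma convex_exitPathConstraint (t : I) : Convex ℝ (exitPathConstraint x y j t) := by
  unfold exitPathConstraint
  split_ifs
  exacts [convex_singleton x, convex_singleton y, convex_simplexStratum j]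

lemma exitPathConstraint_subset (hx : x ∈ stdSimplex ℝ ι) (hy : y ∈ stdSimplex ℝ ι) (t : I) :
    exitPathConstraint x y j t ⊆ stdSimplex ℝ ι := by
  unfold exitPathConstraint
  split_ifs
  exacts [Set.singleton_subset_iff.2 hx, Set.singleton_subset_iff.2 hy, simplexStratum_subset j]

lemma lineMap_mem_exitPathConstraint (hx : x ∈ stdSimplex ℝ ι) (hxj : ∀ k, j < k → x k = 0)
    (hy : y ∈ simplexStratum j) (t : I) :
    AffineMap.lineMap x y (t : ℝ) ∈ exitPathConstraint x y j t := by
  unfold exitPathConstraint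
  split_ifs with h₀ h₁
  · simp [h₀]
  · simp [h₁]
  · exact lineMap_mem_simplexStratum hx hxj hy (unitInterval.pos_iff_ne_zero.2 h₀) t.2.2

end ExitPaths

lemma forall_mem_exitPathConstraint_iff {ι : Type*} [Fintype ι] [LinearOrder ι] {j : ι}
    {x y : stdSimplex ℝ ι} (hy : (y : ι → ℝ) ∈ simplexStratum j) (γ : C(I, stdSimplex ℝ ι)) :
    (γ 0 = x ∧ γ 1 = y ∧ ∀ t : I, t ≠ 0 →
      (γ t : ι → ℝ) j ≠ 0 ∧ ∀ k, j < k → (γ t : ι → ℝ) k = 0) ↔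
    ∀ t, (γ t : ι → ℝ) ∈ exitPathConstraint x y j t := by
  constructor
  · rintro ⟨h₀, h₁, hγ⟩ t
    unfold exitPathConstraint
    split_ifs with ht₀ ht₁
    · simp [ht₀, h₀]
    · simp [ht₁, h₁]
    · exact ⟨(γ t).2, hγ t ht₀⟩
  · intro hγ
    have h₀ : γ 0 = x := by simpa [exitPathConstraint] using hγ 0
    have h₁ : γ 1 = y := by simpa [exitPathConstraint] using hγ 1
    refine ⟨h₀, h₁, fun t ht => ?_⟩
    by_cases ht₁ : t = 1
    · exact ht₁ ▸ h₁ ▸ hy.2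
    · have hγt := hγ t
      simp only [exitPathConstraint, ht, ht₁, if_false] at hγt
      exact hγt.2

/-- For `x` in stratum `i`, `y` in stratum `j`, `i ≤ j`, the formula
`h(γ,s)(t) = (1−s)γ(t) + s(1−t)x + s t y` is well defined on the space `E_{x,y}` of exit
paths from `x` to `y` (for `t > 0` the convex combination lies in `|Δⁿ|` and in the stratum
`j`), and `E_{x,y}` is contractible. -/
theorem stmt_7 (n : ℕ) (i j : Fin (n+1)) (hij : i ≤ j)
    (x y : stdSimplex ℝ (Fin (n+1)))
    (hx : (x : Fin (n+1) → ℝ) i ≠ 0 ∧ ∀ k, i < k → (x : Fin (n+1) → ℝ) k = 0)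
    (hy : (y : Fin (n+1) → ℝ) j ≠ 0 ∧ ∀ k, j < k → (y : Fin (n+1) → ℝ) k = 0) :
    (∀ γ : C(unitInterval, stdSimplex ℝ (Fin (n+1))),
      γ 0 = x → γ 1 = y →
      (∀ t : unitInterval, t ≠ 0 →
        (γ t : Fin (n+1) → ℝ) j ≠ 0 ∧ ∀ k, j < k → (γ t : Fin (n+1) → ℝ) k = 0) →
      ∀ s : ℝ, s ∈ Set.Icc (0:ℝ) 1 → ∀ t : unitInterval, t ≠ 0 →
        (fun k => (1 - s) * (γ t : Fin (n+1) → ℝ) k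
            + s * (1 - (t : ℝ)) * (x : Fin (n+1) → ℝ) k
            + s * (t : ℝ) * (y : Fin (n+1) → ℝ) k) ∈ stdSimplex ℝ (Fin (n+1)) ∧
        ((1 - s) * (γ t : Fin (n+1) → ℝ) j
            + s * (1 - (t : ℝ)) * (x : Fin (n+1) → ℝ) j
            + s * (t : ℝ) * (y : Fin (n+1) → ℝ) j ≠ 0) ∧
        (∀ k, j < k → (1 - s) * (γ t : Fin (n+1) → ℝ) k
            + s * (1 - (t : ℝ)) * (x : Fin (n+1) → ℝ) k
            + s * (t : ℝ) * (y : Fin (n+1) → ℝ) k = 0)) ∧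
    ContractibleSpace
      {γ : C(unitInterval, stdSimplex ℝ (Fin (n+1))) //
        γ 0 = x ∧ γ 1 = y ∧ ∀ t : unitInterval, t ≠ 0 →
          (γ t : Fin (n+1) → ℝ) j ≠ 0 ∧ ∀ k, j < k → (γ t : Fin (n+1) → ℝ) k = 0} := by
  have hxj : ∀ k, j < k → (x : Fin (n+1) → ℝ) k = 0 := fun k hk => hx.2 k (hij.trans_lt hk)
  have hyj : (y : Fin (n+1) → ℝ) ∈ simplexStratum j := ⟨y.2, hy⟩
  refine ⟨fun γ _ _ hγ s hs t ht => ?_, ?_⟩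
  · exact convexCombination_mem_simplexStratum ⟨(γ t).2, hγ t ht⟩ x.2 hxj hyj hs.1 hs.2
      (unitInterval.pos_iff_ne_zero.2 ht) t.2.2
  · let ℓ : C(I, Fin (n+1) → ℝ) := ⟨fun t => AffineMap.lineMap (x : Fin (n+1) → ℝ) y (t : ℝ),
      by fun_prop⟩
    have := ContinuousMap.contractibleSpace_of_forall_mem_convex convex_exitPathConstraint
      (exitPathConstraint_subset x.2 y.2) ℓ (lineMap_mem_exitPathConstraint x.2 hxj hyj)
    exact (Homeomorph.subtype (q := fun γ : C(I, stdSimplex ℝ (Fin (n+1))) =>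
      ∀ t, (γ t : Fin (n+1) → ℝ) ∈ exitPathConstraint x y j t) (.refl _)
      (forall_mem_exitPathConstraint_iff hyj)).contractibleSpace
end

section
/- Let P be a poset and σ : [n] → P a monotone map (a stratified n-simplex) with n ≥ 3. Suppose σ(0) ≠ σ(1). Consider the category C obtained from the poset [n] by freely adjoining a morphism a : 1 → n and imposing that the composite 0 → 1 → n via a equals the unique morphism 0 → n. Then in C the morphisms a and the order-morphism 1 → n are distinct, and there is no functor Δⁿ → C over P extending the assignment on the horn Λ₀ⁿ that sends the edge {1, n} to a. -/
open CategoryTheory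

/-- Auxiliary type: the category obtained from `[n]` by adjoining `a : 1 → n`. -/
structure CCaux (n : ℕ) : Type where
  val : Fin (n+1)

instance CCaux.cat (n : ℕ) : SmallCategory (CCaux n) where
  Hom i j := {b : Bool // i.val ≤ j.val ∧ (b = true → (i.val : ℕ) = 1 ∧ (j.val : ℕ) = n)}
  id i := ⟨false, le_rfl, by simp⟩
  comp {i j k} f g := ⟨(f.1 || g.1) && decide ((i.val : ℕ) = 1), f.2.1.trans g.2.1, by
    intro h
    simp only [Bool.and_eq_true, Bool.or_eq_true, decide_eq_true_eq] at h
    obtain ⟨hf | hg, hi⟩ := h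
    · obtain ⟨-, hj⟩ := f.2.2 hf
      have hjk : (j.val : ℕ) ≤ (k.val : ℕ) := g.2.1
      have hk : (k.val : ℕ) ≤ n := Nat.lt_succ_iff.mp k.val.isLt
      exact ⟨hi, by omega⟩
    · exact ⟨hi, (g.2.2 hg).2⟩⟩
  id_comp {i j} f := by
    apply Subtype.ext
    show ((false || f.1) && decide ((i.val : ℕ) = 1)) = f.1
    by_cases h : f.1 = true
    · simp [h, (f.2.2 h).1]
    · simp only [Bool.not_eq_true] at h; simp [h]
  comp_id {i j} f := by
    apply Subtype.ext
    show ((f.1 || false) && decide ((i.val : ℕ) = 1)) = f.1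
    by_cases h : f.1 = true
    · simp [h, (f.2.2 h).1]
    · simp only [Bool.not_eq_true] at h; simp [h]
  assoc {i j k l} f g h := by
    apply Subtype.ext
    show (((f.1 || g.1) && decide ((i.val : ℕ) = 1) || h.1) && decide ((i.val : ℕ) = 1))
       = ((f.1 || (g.1 || h.1) && decide ((j.val : ℕ) = 1)) && decide ((i.val : ℕ) = 1))
    by_cases hi : (i.val : ℕ) = 1
    · simp only [hi, decide_true, Bool.and_true]
      by_cases hh : h.1 = true
      · obtain ⟨hk1, -⟩ := h.2.2 hh
        have hij : (i.val : ℕ) ≤ (j.val : ℕ) := f.2.1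
        have hjk : (j.val : ℕ) ≤ (k.val : ℕ) := g.2.1
        have hj : (j.val : ℕ) = 1 := by omega
        simp [hh, hj]
      · simp only [Bool.not_eq_true] at hh
        by_cases hg : g.1 = true
        · simp [hg, hh, (g.2.2 hg).1]
        · simp only [Bool.not_eq_true] at hg; simp [hg, hh]
    · simp [hi]

/-- Let `σ : [n] → P` be a stratified `n`-simplex with `n ≥ 3` and
`σ(0) ≠ σ(1)`. There is a category `C` over `P` obtained from `[n]` by adjoining a
morphism `a : 1 → n`, distinct from the order-morphism `1 → n` but equalized with it by
`0 → 1`, such that no functor `[n] → C` over `P` extends the horn datum sending the edge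
`{1, n}` to `a` and every other edge to the canonical order-morphism. -/
theorem stmt_15 (n : ℕ) (hn : 3 ≤ n) {P : Type} [PartialOrder P]
    (σ : Fin (n+1) →o P)
    (i0 i1 iN : Fin (n+1)) (h0 : (i0 : ℕ) = 0) (h1 : (i1 : ℕ) = 1) (hN : (iN : ℕ) = n)
    (h01 : i0 ≤ i1) (h1N : i1 ≤ iN) (h0N : i0 ≤ iN)
    (hσ : σ i0 ≠ σ i1) :
    ∃ (C : Type) (_ : SmallCategory C) (π : C ⥤ P) (obj : Fin (n+1) → C)
      (can : ∀ i j : Fin (n+1), i ≤ j → (obj i ⟶ obj j))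
      (a : obj i1 ⟶ obj iN),
      (∀ i, π.obj (obj i) = σ i) ∧
      (∀ (i j : Fin (n+1)) (h : i ≤ j),
        HEq (π.map (can i j h)) (homOfLE (σ.monotone h))) ∧
      (∀ i, can i i le_rfl = 𝟙 (obj i)) ∧
      (∀ (i j k : Fin (n+1)) (hij : i ≤ j) (hjk : j ≤ k),
        can i j hij ≫ can j k hjk = can i k (hij.trans hjk)) ∧
      a ≠ can i1 iN h1N ∧
      can i0 i1 h01 ≫ a = can i0 iN h0N ∧
      ¬ ∃ F : Fin (n+1) ⥤ C,
          F ⋙ π = σ.monotone.functor ∧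
          (∀ i, F.obj i = obj i) ∧
          HEq (F.map (homOfLE h1N)) a ∧
          (∀ (i j : Fin (n+1)) (h : i ≤ j), ¬(i = i1 ∧ j = iN) →
            HEq (F.map (homOfLE h)) (can i j h)) := by
  refine ⟨CCaux n, inferInstance,
    { obj := fun i => σ i.val
      map := fun {i j} f => homOfLE (σ.monotone f.2.1)
      map_id := fun i => Subsingleton.elim _ _
      map_comp := fun f g => Subsingleton.elim _ _ },
    fun i => ⟨i⟩,
    fun i j h => ⟨false, h, by simp⟩,
    ⟨true, h1N, fun _ => ⟨h1, hN⟩⟩,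
    fun i => rfl,
    fun i j h => heq_of_eq (Subsingleton.elim _ _),
    fun i => rfl,
    ?_, ?_, ?_, ?_⟩
  · -- composition of canonical maps
    intro i j k hij hjk
    apply Subtype.ext
    show ((false || false) && decide ((i : ℕ) = 1)) = false
    simp
  · -- a ≠ can
    intro h
    have := congrArg Subtype.val h
    simp at this
  · -- equalization
    apply Subtype.ext
    show ((false || true) && decide ((i0 : ℕ) = 1)) = false
    simp [h0]
  · -- no extension
    rintro ⟨F, -, hFobj, hFa, hFcan⟩
    set obj : Fin (n+1) → CCaux n := fun i => ⟨i⟩ with hobj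
    have hm2 : 2 < n + 1 := by omega
    set m : Fin (n+1) := ⟨2, hm2⟩ with hm
    have hmv : (m : ℕ) = 2 := rfl
    have h1m : i1 ≤ m := by rw [Fin.le_def]; omega
    have hmN : m ≤ iN := by rw [Fin.le_def]; omega
    have hcomp : homOfLE h1N = homOfLE h1m ≫ homOfLE hmN := Subsingleton.elim _ _
    have hFe : F.map (homOfLE h1N)
        = eqToHom (hFobj i1) ≫ (⟨true, h1N, fun _ => ⟨h1, hN⟩⟩ :
            (⟨i1⟩ : CCaux n) ⟶ ⟨iN⟩) ≫ eqToHom (hFobj iN).symm :=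
      (conj_eqToHom_iff_heq _ _ (hFobj i1) (hFobj iN)).2 hFa
    have hne1 : ¬(i1 = i1 ∧ m = iN) := by
      rintro ⟨-, hmeq⟩
      have : (m : ℕ) = (iN : ℕ) := by rw [hmeq]
      omega
    have hne2 : ¬(m = i1 ∧ iN = iN) := by
      rintro ⟨hmeq, -⟩
      have : (m : ℕ) = (i1 : ℕ) := by rw [hmeq]
      omega
    have hF1 : F.map (homOfLE h1m)
        = eqToHom (hFobj i1) ≫ (⟨false, h1m, by simp⟩ :
            (⟨i1⟩ : CCaux n) ⟶ ⟨m⟩) ≫ eqToHom (hFobj m).symm :=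
      (conj_eqToHom_iff_heq _ _ (hFobj i1) (hFobj m)).2 (hFcan i1 m h1m hne1)
    have hF2 : F.map (homOfLE hmN)
        = eqToHom (hFobj m) ≫ (⟨false, hmN, by simp⟩ :
            (⟨m⟩ : CCaux n) ⟶ ⟨iN⟩) ≫ eqToHom (hFobj iN).symm :=
      (conj_eqToHom_iff_heq _ _ (hFobj m) (hFobj iN)).2 (hFcan m iN hmN hne2)
    have this' : _ := hFe.symm.trans (by rw [hcomp, F.map_comp, hF1, hF2])
    simp only [Category.assoc, eqToHom_trans_assoc, eqToHom_refl,
      Category.id_comp] at this'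
    rw [cancel_epi] at this'
    simp only [← Category.assoc] at this'
    rw [cancel_mono] at this'
    have hval := congrArg Subtype.val this'
    change true = ((false || false) && decide ((i1 : ℕ) = 1)) at hval
    simp at hval
end
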